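/- The category of subdistributions acts on the magmoid of normalized kernels: defining p ≺ f = n(p•;f) for a normalized kernel p : X → MDY and a substochastic kernel f : Y → DMZ, one has p ≺ id = p and p ≺ (f;g) = (p ≺ f) ≺ g. -/
import Mathlib


open scoped NNReal

/-- A normalized kernel: each input maps to either failure or a probability
distribution. -/
def IsNormalizedKernel {X Y : Type*} [Fintype Y] (p : X → Option (Y → ℝ≥0)) : Prop :=
  ∀ x d, p x = some d → ∑ y, d y = 1

/-- A substochastic kernel. -/
def IsSubstochastic {X Y : Type*} [Fintype Y] (f : X → Y → ℝ≥0) : Prop :=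
  ∀ x, ∑ y, f x y ≤ 1

/-- Inclusion of a normalized kernel into substochastic kernels:
failure becomes the zero subdistribution. -/
def incl {X Y : Type*} (p : X → Option (Y → ℝ≥0)) : X → Y → ℝ≥0 :=
  fun x y => (p x).elim 0 (fun d => d y)

/-- Composition of substochastic kernels. -/
def scomp {X Y Z : Type*} [Fintype Y] (f : X → Y → ℝ≥0) (g : Y → Z → ℝ≥0) :
    X → Z → ℝ≥0 := fun x z => ∑ y, f x y * g y z

open scoped Classical in
/-- Pointwise renormalization of a substochastic kernel. -/
noncomputable def norm {X Y : Type*} [Fintype Y] (f : X → Y → ℝ≥0) :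
    X → Option (Y → ℝ≥0) := fun x =>
  if (∑ y, f x y) = 0 then none else some (fun y => f x y / ∑ y', f x y')

/-- The action of a substochastic kernel on a normalized kernel:
`p ≺ f = n(p•; f)`. -/
noncomputable def act {X Y Z : Type*} [Fintype Y] [Fintype Z]
    (p : X → Option (Y → ℝ≥0)) (f : Y → Z → ℝ≥0) : X → Option (Z → ℝ≥0) :=
  norm (scomp (incl p) f)

/-- The identity substochastic kernel. -/
def idKer (Y : Type*) [DecidableEq Y] : Y → Y → ℝ≥0 :=
  fun y y' => if y = y' then 1 else 0

lemma norm_eq_none {X Y : Type*} [Fintype Y] (f : X → Y → ℝ≥0) (x : X)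
    (h : (∑ y, f x y) = 0) : norm f x = none := by
  unfold _root_.norm; rw [if_pos h]

lemma norm_eq_some {X Y : Type*} [Fintype Y] (f : X → Y → ℝ≥0) (x : X)
    (h : (∑ y, f x y) ≠ 0) :
    norm f x = some (fun y => f x y / ∑ y', f x y') := by
  unfold _root_.norm; rw [if_neg h]

/-- The category of subdistributions acts on the magmoid of normalized
kernels: `p ≺ id = p` and `p ≺ (f;g) = (p ≺ f) ≺ g`. -/
theorem subStoch_action {X Y Z W : Type*}
    [Fintype Y] [Fintype Z] [Fintype W] [DecidableEq Y]
    (p : X → Option (Y → ℝ≥0)) (f : Y → Z → ℝ≥0) (g : Z → W → ℝ≥0)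
    (hp : IsNormalizedKernel p) (hf : IsSubstochastic f) (hg : IsSubstochastic g) :
    act p (idKer Y) = p ∧ act p (scomp f g) = act (act p f) g := by
  classical
  constructor
  · funext x
    have hid : scomp (incl p) (idKer Y) x = incl p x := by
      funext y
      simp [scomp, idKer, incl, Finset.sum_ite_eq, eq_comm]
    cases hpx : p x with
    | none =>
      have h0 : (∑ y, scomp (incl p) (idKer Y) x y) = 0 := by
        simp [hid, incl, hpx]
      rw [act.eq_def, norm_eq_none _ _ h0]
    | some d =>
      have hd : ∑ y, d y = 1 := hp x d hpx
      have h1 : (∑ y, scomp (incl p) (idKer Y) x y) = 1 := by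
        simp [hid, incl, hpx, hd]
      rw [act.eq_def, norm_eq_some _ _ (by rw [h1]; exact one_ne_zero)]
      refine congrArg some (funext fun y => ?_)
      simp [hid, h1, incl, hpx, hd]
  · funext x
    cases hpx : p x with
    | none =>
      have hz : ∀ (Z' : Type) [Fintype Z'] (h : Y → Z' → ℝ≥0) (z : Z'),
          scomp (incl p) h x z = 0 := by
        intro Z' _ h z
        simp [scomp, incl, hpx]
      have hfg0 : (∑ w, scomp (incl p) (scomp f g) x w) = 0 := by
        refine Finset.sum_eq_zero fun w _ => ?_
        simp [scomp, incl, hpx]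
      have hf0 : (∑ z, scomp (incl p) f x z) = 0 := by
        refine Finset.sum_eq_zero fun z _ => ?_
        simp [scomp, incl, hpx]
      have hactf : act p f x = none := norm_eq_none _ _ hf0
      have h0' : (∑ w, scomp (incl (act p f)) g x w) = 0 := by
        refine Finset.sum_eq_zero fun w _ => ?_
        simp [scomp, incl, hactf]
      rw [act.eq_def, norm_eq_none _ _ hfg0, act.eq_def, norm_eq_none _ _ h0']
    | some d =>
      have hd : ∑ y, d y = 1 := hp x d hpx
      set s : ℝ≥0 := ∑ z, scomp (incl p) f x z with hs
      have hexchpt : ∀ w, scomp (incl p) (scomp f g) x w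
          = ∑ z, scomp (incl p) f x z * g z w := by
        intro w
        simp only [scomp, Finset.sum_mul, Finset.mul_sum]
        rw [Finset.sum_comm]
        exact Finset.sum_congr rfl fun z _ => Finset.sum_congr rfl fun y _ => by ring
      have hexch : (∑ w, scomp (incl p) (scomp f g) x w)
          = ∑ w, ∑ z, scomp (incl p) f x z * g z w :=
        Finset.sum_congr rfl fun w _ => hexchpt w
      by_cases hs0 : s = 0
      · have hz : ∀ z, scomp (incl p) f x z = 0 :=
          fun z => Finset.sum_eq_zero_iff.1 hs0 z (Finset.mem_univ z)
        have hfg0 : (∑ w, scomp (incl p) (scomp f g) x w) = 0 := by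
          rw [hexch]; simp [hz]
        have hactf : act p f x = none := norm_eq_none _ _ hs0
        have h0' : (∑ w, scomp (incl (act p f)) g x w) = 0 := by
          refine Finset.sum_eq_zero fun w _ => ?_
          simp [scomp, incl, hactf]
        rw [act.eq_def, norm_eq_none _ _ hfg0, act.eq_def, norm_eq_none _ _ h0']
      · have hactf : act p f x
            = some (fun z => scomp (incl p) f x z / s) := norm_eq_some _ _ hs0
        set t : ℝ≥0 := ∑ w, scomp (incl p) (scomp f g) x w with ht
        have htval : t = ∑ w, ∑ z, scomp (incl p) f x z * g z w := hexch
        have hrhsval : ∀ w, scomp (incl (act p f)) g x w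
            = (∑ z, scomp (incl p) f x z * g z w) / s := by
          intro w
          simp only [scomp, incl, hactf, Option.elim]
          rw [Finset.sum_div]
          exact Finset.sum_congr rfl fun z _ => div_mul_eq_mul_div _ _ _
        have hrhstot : (∑ w, scomp (incl (act p f)) g x w) = t / s := by
          rw [htval, Finset.sum_div]
          exact Finset.sum_congr rfl fun w _ => hrhsval w
        by_cases ht0 : t = 0
        · have h0' : (∑ w, scomp (incl (act p f)) g x w) = 0 := by
            rw [hrhstot, ht0, zero_div]
          rw [act.eq_def, norm_eq_none _ _ ht0, act.eq_def, norm_eq_none _ _ h0']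
        · have hts : t / s ≠ 0 := by
            simp [div_eq_zero_iff, ht0, hs0]
          rw [act.eq_def, norm_eq_some _ _ ht0, act.eq_def,
            norm_eq_some _ _ (hrhstot ▸ hts)]
          refine congrArg some (funext fun w => ?_)
          rw [hrhsval w, hrhstot, div_div_div_cancel_right₀ hs0, ← ht, hexchpt w]
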